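/- For every c > 0 and every ū₀ ∈ [0,1], there is exactly one triple (u₁, u₂, μ̄) with u₁, u₂ ≥ 0 satisfying u₁ = (2u₂ − ū₀u₂ − ū₀ + 5)/(3cu₂ + 3c + 2u₂ + 2), u₂ = (u₁ + ū₀u₁ + ū₀ + 4)/(3cu₁ + 3c + 2u₁ + 2), and μ̄ = (u₁ − u₂ + 1 + ū₀)/3; it is given by u₁ = V₁(c,ū₀), u₂ = V₂(c,ū₀), μ̄ = (V₁(c,ū₀) − V₂(c,ū₀) + 1 + ū₀)/3. Hence the Multi-Leader-Follower Nash Equilibrium exists and is unique. -/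
import Mathlib


/-- Discriminant-type quantity appearing in the Multi-Leader-Follower equilibrium. -/
noncomputable def Delta (c u : ℝ) : ℝ :=
  Real.sqrt ((3 + 3 * c + u) * (36 + 57 * c + 9 * c ^ 2 + u - u ^ 2) / (4 + 3 * c - u))

/-- Multi-Leader-Follower equilibrium advertisement efficiency of major player 2. -/
noncomputable def V2 (c u : ℝ) : ℝ :=
  (-1 - 3 * c + u + Delta c u) / (2 * (2 + 3 * c))

/-- Multi-Leader-Follower equilibrium advertisement efficiency of major player 1. -/
noncomputable def V1 (c u : ℝ) : ℝ :=
  (1 / (3 + 3 * c + u)) *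
    (1 - 2 * u + (1 + 3 * c - u - Delta c u) * (u - 3 * c - 4) / (2 * (2 + 3 * c)))

set_option maxHeartbeats 1000000 in
theorem stmt_18 (c ubar₀ : ℝ) (hc : 0 < c) (h₀ : ubar₀ ∈ Set.Icc (0 : ℝ) 1) :
    (0 ≤ V1 c ubar₀ ∧ 0 ≤ V2 c ubar₀ ∧
      V1 c ubar₀ = (2 * V2 c ubar₀ - ubar₀ * V2 c ubar₀ - ubar₀ + 5)
        / (3 * c * V2 c ubar₀ + 3 * c + 2 * V2 c ubar₀ + 2) ∧
      V2 c ubar₀ = (V1 c ubar₀ + ubar₀ * V1 c ubar₀ + ubar₀ + 4)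
        / (3 * c * V1 c ubar₀ + 3 * c + 2 * V1 c ubar₀ + 2)) ∧
    ∀ u₁ u₂ m : ℝ, 0 ≤ u₁ → 0 ≤ u₂ →
      u₁ = (2 * u₂ - ubar₀ * u₂ - ubar₀ + 5) / (3 * c * u₂ + 3 * c + 2 * u₂ + 2) →
      u₂ = (u₁ + ubar₀ * u₁ + ubar₀ + 4) / (3 * c * u₁ + 3 * c + 2 * u₁ + 2) →
      m = (u₁ - u₂ + 1 + ubar₀) / 3 →
      u₁ = V1 c ubar₀ ∧ u₂ = V2 c ubar₀ ∧
        m = (V1 c ubar₀ - V2 c ubar₀ + 1 + ubar₀) / 3 := by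
  obtain ⟨h0, h1⟩ := h₀
  set u : ℝ := ubar₀ with hu
  set e : ℝ := Delta c u with hedef
  set v1 : ℝ := V1 c u with hv1def
  set v2 : ℝ := V2 c u with hv2def
  have ha : (0:ℝ) < 2 + 3 * c := by linarith
  have hS : (0:ℝ) < 3 + 3 * c + u := by linarith
  have hD : (0:ℝ) < 4 + 3 * c - u := by linarith
  have he0 : 0 ≤ e := Real.sqrt_nonneg _
  have hN : 0 ≤ (3 + 3 * c + u) * (36 + 57 * c + 9 * c ^ 2 + u - u ^ 2) / (4 + 3 * c - u) := by
    apply div_nonneg _ hD.le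
    apply mul_nonneg hS.le
    nlinarith
  have hesq : e ^ 2 = (3 + 3 * c + u) * (36 + 57 * c + 9 * c ^ 2 + u - u ^ 2) / (4 + 3 * c - u) := by
    rw [hedef, Delta, sq, Real.mul_self_sqrt hN]
  have hR : e ^ 2 * (4 + 3 * c - u) = (3 + 3 * c + u) * (36 + 57 * c + 9 * c ^ 2 + u - u ^ 2) := by
    rw [hesq, div_mul_cancel₀ _ hD.ne']
  -- e ≥ 1 + 3c - u
  have hesq2 : (1 + 3 * c - u) ^ 2 ≤ e ^ 2 := by
    nlinarith [hR, hD, sq_nonneg (1 + 3 * c - u)]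
  have hge : 1 + 3 * c - u ≤ e := by
    nlinarith [sq_nonneg (e + (1 + 3 * c - u)), sq_nonneg (e - (1 + 3 * c - u))]
  -- formulas for v1, v2
  have hv2' : 2 * (2 + 3 * c) * v2 = -1 - 3 * c + u + e := by
    rw [hv2def, V2, ← hedef]
    field_simp
  have hv1' : (3 + 3 * c + u) * (2 * (2 + 3 * c)) * v1
      = (1 - 2 * u) * (2 * (2 + 3 * c)) + (1 + 3 * c - u - e) * (u - 3 * c - 4) := by
    rw [hv1def, V1, ← hedef]
    field_simp
  have hv2nn : 0 ≤ v2 := by nlinarith [hv2']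
  -- the two cleared equilibrium equations
  have hmulne : (4 * (2 + 3 * c) ^ 2 * (3 + 3 * c + u)) ≠ 0 := by positivity
  have hE1 : v1 * ((3 * c + 2) * (v2 + 1)) = (2 - u) * v2 + (5 - u) := by
    apply mul_right_cancel₀ hmulne
    linear_combination ((2 + 3 * c) * ((1 - 2 * u) * (2 * (2 + 3 * c)) + (1 + 3 * c - u - e) * (u - 3 * c - 4))
        - 2 * (2 + 3 * c) * (3 + 3 * c + u) * (2 - u)) * hv2'
      + ((2 + 3 * c) * (2 * (2 + 3 * c) * v2 + 2 * (2 + 3 * c))) * hv1'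
      + (2 + 3 * c) * hR
  have hE2 : v2 * ((3 * c + 2) * (v1 + 1)) = (1 + u) * v1 + (4 + u) := by
    apply mul_right_cancel₀ hmulne
    linear_combination ((2 + 3 * c) * (-1 - 3 * c + u + e) - 2 * (2 + 3 * c) * (1 + u)) * hv1'
      + ((2 + 3 * c) * (2 * (2 + 3 * c) * (3 + 3 * c + u) * v1 + 2 * (2 + 3 * c) * (3 + 3 * c + u))) * hv2'
      + (2 + 3 * c) * hR
  have hden2 : (0:ℝ) < (3 * c + 2) * (v2 + 1) := mul_pos (by linarith) (by linarith)
  have hv1nn : 0 ≤ v1 := by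
    have hq : (0:ℝ) ≤ (2 - u) * v2 + (5 - u) := by nlinarith [mul_nonneg (by linarith : (0:ℝ) ≤ 2 - u) hv2nn]
    rw [eq_div_of_mul_eq hden2.ne' hE1]
    exact div_nonneg hq hden2.le
  have hden1 : (0:ℝ) < (3 * c + 2) * (v1 + 1) := mul_pos (by linarith) (by linarith)
  constructor
  · refine ⟨hv1nn, hv2nn, ?_, ?_⟩
    · rw [eq_div_iff (by nlinarith [mul_nonneg hc.le hv2nn] : 3 * c * v2 + 3 * c + 2 * v2 + 2 ≠ 0)]
      linear_combination hE1
    · rw [eq_div_iff (by nlinarith [mul_nonneg hc.le hv1nn] : 3 * c * v1 + 3 * c + 2 * v1 + 2 ≠ 0)]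
      linear_combination hE2
  · intro u₁ u₂ m hu₁ hu₂ he1 he2 hm
    have hd2 : (3 * c * u₂ + 3 * c + 2 * u₂ + 2) ≠ 0 := by nlinarith [mul_nonneg hc.le hu₂]
    have hd1 : (3 * c * u₁ + 3 * c + 2 * u₁ + 2) ≠ 0 := by nlinarith [mul_nonneg hc.le hu₁]
    rw [eq_div_iff hd2] at he1
    rw [eq_div_iff hd1] at he2
    -- quadratic satisfied by u₂ and by v2
    have hq : (3 * c + 2) * (3 * c + 4 - u) * u₂ ^ 2
        + ((3 * c + 2) * (3 * c + 3 - 2 * u) - (2 + u - u ^ 2)) * u₂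
        = 13 + 12 * c + 6 * u + 3 * c * u - u ^ 2 := by
      linear_combination ((3 * c + 2) * (u₂ + 1)) * he2 - ((3 * c + 2) * u₂ - 1 - u) * he1
    have hqv : (3 * c + 2) * (3 * c + 4 - u) * v2 ^ 2
        + ((3 * c + 2) * (3 * c + 3 - 2 * u) - (2 + u - u ^ 2)) * v2
        = 13 + 12 * c + 6 * u + 3 * c * u - u ^ 2 := by
      linear_combination ((3 * c + 2) * (v2 + 1)) * hE2 - ((3 * c + 2) * v2 - 1 - u) * hE1
    have hfac : (u₂ - v2) * ((3 * c + 2) * (3 * c + 4 - u) * (u₂ + v2)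
        + ((3 * c + 2) * (3 * c + 3 - 2 * u) - (2 + u - u ^ 2))) = 0 := by
      linear_combination hq - hqv
    have h2v : u₂ = v2 := by
      rcases mul_eq_zero.mp hfac with h | h
      · linarith [sub_eq_zero.mp h]
      · exfalso
        have hC : (3 * c + 2) * (3 * c + 4 - u) * (u₂ * v2)
            = -(13 + 12 * c + 6 * u + 3 * c * u - u ^ 2) := by
          linear_combination u₂ * h - hq
        have hp : (0:ℝ) ≤ (3 * c + 2) * (3 * c + 4 - u) * (u₂ * v2) :=
          mul_nonneg (mul_nonneg (by linarith) (by linarith)) (mul_nonneg hu₂ hv2nn)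
        nlinarith [mul_nonneg hc.le h0]
    subst h2v
    have h1v : u₁ = v1 := by
      have hcan : u₁ * ((3 * c + 2) * (v2 + 1)) = v1 * ((3 * c + 2) * (v2 + 1)) := by
        rw [hE1]; linear_combination he1
      exact mul_right_cancel₀ hden2.ne' hcan
    subst h1v
    exact ⟨rfl, rfl, hm⟩
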